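/- arXiv:2101.06177 — 4 statements merged into one kernel-verified Lean document; each statement's English description precedes it below -/
import Mathlib

section
/- For all natural numbers n, d, w with 0 ≤ w < n, the function N defined by the recursion N(n,d,0) = 1, N(n,d,n) = d^n, and N(n,d,w) = (d-1)·N(n-1,d,w-1) + N(n-1,d,w) for 0 < w < n, satisfies the closed form N(n,d,w) = Σ_{k=0}^{w} C(n-1-k, w-k) · d^k · (d-1)^{w-k}, where C(a,b) denotes the binomial coefficient. -/
/-- For all natural numbers `n, d, w` with `0 ≤ w < n`, the function `N`
defined by the recursion `N(n,d,0) = 1`, `N(n,d,n) = d^n`, and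
`N(n,d,w) = (d-1)·N(n-1,d,w-1) + N(n-1,d,w)` for `0 < w < n`, satisfies the closed form
`N(n,d,w) = Σ_{k=0}^{w} C(n-1-k, w-k) · d^k · (d-1)^{w-k}`. -/
theorem iw_novel_states_closed_form
    (N : ℕ → ℕ → ℕ → ℕ)
    (hbase0 : ∀ n d : ℕ, N n d 0 = 1)
    (hbasen : ∀ n d : ℕ, N n d n = d ^ n)
    (hrec : ∀ n d w : ℕ, 0 < w → w < n →
      N n d w = (d - 1) * N (n - 1) d (w - 1) + N (n - 1) d w)
    (n d w : ℕ) (hw : w < n) :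
    N n d w =
      ∑ k ∈ Finset.range (w + 1),
        Nat.choose (n - 1 - k) (w - k) * d ^ k * (d - 1) ^ (w - k) := by
  suffices h : ∀ n w : ℕ, w ≤ n → N n d w =
      ∑ k ∈ Finset.range (w + 1),
        Nat.choose (n - 1 - k) (w - k) * d ^ k * (d - 1) ^ (w - k) from
    h n w hw.le
  clear hw n w
  intro n
  induction n with
  | zero =>
    intro w hw'
    interval_cases w
    simp [hbase0]
  | succ m ih =>
    intro w hw'
    rcases Nat.eq_zero_or_pos w with rfl | hpos
    · simp [hbase0]
    rcases eq_or_lt_of_le hw' with rfl | hlt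
    · rw [hbasen]
      rw [Finset.sum_range_succ]
      have hz : ∑ k ∈ Finset.range (m + 1),
          Nat.choose (m + 1 - 1 - k) (m + 1 - k) * d ^ k * (d - 1) ^ (m + 1 - k) = 0 := by
        apply Finset.sum_eq_zero
        intro k hk
        simp only [Finset.mem_range] at hk
        have : Nat.choose (m - k) (m + 1 - k) = 0 :=
          Nat.choose_eq_zero_of_lt (by omega)
        simp [this]
      rw [hz]
      have h1 : m + 1 - (m + 1) = 0 := by omega
      simp [h1]
    · -- 0 < w < m + 1
      rw [hrec _ _ _ hpos hlt]
      have h1 := ih (w - 1) (by omega)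
      have h2 := ih w (by omega)
      simp only [Nat.add_sub_cancel] at *
      rw [h1, h2]
      obtain ⟨v, rfl⟩ : ∃ v, w = v + 1 := ⟨w - 1, by omega⟩
      simp only [Nat.add_sub_cancel]
      rw [Finset.sum_range_succ (n := v + 1),
          Finset.sum_range_succ (n := v + 1), Finset.mul_sum]
      have hlast : Nat.choose (m - 1 - (v + 1)) (v + 1 - (v + 1)) * d ^ (v + 1) *
            (d - 1) ^ (v + 1 - (v + 1)) =
          Nat.choose (m - (v + 1)) (v + 1 - (v + 1)) * d ^ (v + 1) *
            (d - 1) ^ (v + 1 - (v + 1)) := by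
        simp
      have hS : (∑ k ∈ Finset.range (v + 1),
            (d - 1) * (Nat.choose (m - 1 - k) (v - k) * d ^ k * (d - 1) ^ (v - k))) +
          (∑ k ∈ Finset.range (v + 1),
            Nat.choose (m - 1 - k) (v + 1 - k) * d ^ k * (d - 1) ^ (v + 1 - k)) =
          ∑ k ∈ Finset.range (v + 1),
            Nat.choose (m - k) (v + 1 - k) * d ^ k * (d - 1) ^ (v + 1 - k) := by
        rw [← Finset.sum_add_distrib]
        apply Finset.sum_congr rfl
        intro k hk
        simp only [Finset.mem_range] at hk
        have hm : m - k = (m - 1 - k) + 1 := by omega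
        have hv : v + 1 - k = (v - k) + 1 := by omega
        rw [hm, hv, Nat.choose_succ_succ, pow_succ]
        ring
      rw [hlast, ← hS]
      ring
end

section
/- For all natural numbers n, d, w with 0 ≤ w < n, the function N defined by the recursion N(n,d,0) = 1, N(n,d,n) = d^n, and N(n,d,w) = (d-1)·N(n-1,d,w-1) + N(n-1,d,w) for 0 < w < n, satisfies the upper bound N(n,d,w) ≤ (n·d)^w. -/
/-- For all natural numbers `n, d, w` with `0 ≤ w < n`, the function `N`
defined by the recursion `N(n,d,0) = 1`, `N(n,d,n) = d^n`, and
`N(n,d,w) = (d-1)·N(n-1,d,w-1) + N(n-1,d,w)` for `0 < w < n`, satisfies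
`N(n,d,w) ≤ (n·d)^w`. -/
theorem iw_novel_states_upper_bound
    (N : ℕ → ℕ → ℕ → ℕ)
    (hbase0 : ∀ n d : ℕ, N n d 0 = 1)
    (hbasen : ∀ n d : ℕ, N n d n = d ^ n)
    (hrec : ∀ n d w : ℕ, 0 < w → w < n →
      N n d w = (d - 1) * N (n - 1) d (w - 1) + N (n - 1) d w)
    (n d w : ℕ) (hw : w < n) :
    N n d w ≤ (n * d) ^ w := by
  induction n generalizing w with
  | zero => omega
  | succ n ih =>
    rcases Nat.eq_zero_or_pos w with h0 | hpos
    · subst h0; rw [hbase0]; simp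
    · rw [hrec (n + 1) d w hpos hw]
      simp only [Nat.add_sub_cancel]
      have h1 : N n d (w - 1) ≤ (n * d) ^ (w - 1) := ih (w - 1) (by omega)
      have h2 : N n d w ≤ (n * d) ^ w := by
        rcases Nat.lt_or_ge w n with hlt | hge
        · exact ih w hlt
        · have hwn : w = n := by omega
          subst hwn
          rw [hbasen]
          exact Nat.pow_le_pow_left (Nat.le_mul_of_pos_left d (by omega)) w
      calc (d - 1) * N n d (w - 1) + N n d w
          ≤ (d - 1) * (n * d) ^ (w - 1) + (n * d) ^ w :=
            Nat.add_le_add (Nat.mul_le_mul_left _ h1) h2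
        _ = (d - 1 + n * d) * (n * d) ^ (w - 1) := by
            rw [Nat.add_mul]
            congr 1
            conv_lhs => rw [← Nat.succ_pred_eq_of_pos hpos]
            rw [pow_succ, Nat.mul_comm]
            rfl
        _ ≤ ((n + 1) * d) * ((n + 1) * d) ^ (w - 1) := by
            apply Nat.mul_le_mul
            · calc d - 1 + n * d ≤ d + n * d := Nat.add_le_add_right (Nat.sub_le d 1) _
                _ = (n + 1) * d := by ring
            · exact Nat.pow_le_pow_left (Nat.mul_le_mul_right d (by omega)) _
        _ = ((n + 1) * d) ^ w := by
            rw [← pow_succ']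
            congr 1
            omega
end

section
/- For all natural numbers n, d, w with 0 < w < n - 1, the closed-form expression F(n,d,w) = Σ_{k=0}^{w} C(n-1-k, w-k) · d^k · (d-1)^{w-k} satisfies the recurrence (d-1)·F(n-1,d,w-1) + F(n-1,d,w) = F(n,d,w). -/
/-- The closed-form expression `F(n,d,w) = Σ_{k=0}^{w} C(n-1-k, w-k) · d^k · (d-1)^{w-k}`. -/
def F (n d w : ℕ) : ℕ :=
  ∑ k ∈ Finset.range (w + 1), Nat.choose (n - 1 - k) (w - k) * d ^ k * (d - 1) ^ (w - k)

/-- For all natural numbers `n, d, w` with `0 < w < n - 1`, the closed form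
satisfies the recurrence `(d-1)·F(n-1,d,w-1) + F(n-1,d,w) = F(n,d,w)`. -/
theorem closed_form_recurrence (n d w : ℕ) (hw0 : 0 < w) (hw : w < n - 1) :
    (d - 1) * F (n - 1) d (w - 1) + F (n - 1) d w = F n d w := by
  obtain ⟨v, rfl⟩ : ∃ v, w = v + 1 := ⟨w - 1, by omega⟩
  obtain ⟨m, rfl⟩ : ∃ m, n = m + (v + 3) := ⟨n - (v + 3), by omega⟩
  simp only [F, show v + 1 - 1 = v from rfl]
  have h1 : m + (v + 3) - 1 - 1 = m + v + 1 := by omega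
  have h2 : m + (v + 3) - 1 = m + v + 2 := by omega
  rw [Finset.mul_sum, Finset.sum_range_succ (n := v + 1), Finset.sum_range_succ (n := v + 1)]
  have hlast1 : (m + (v + 3) - 1 - 1 - (v + 1)).choose (v + 1 - (v + 1)) * d ^ (v + 1)
      * (d - 1) ^ (v + 1 - (v + 1)) = d ^ (v + 1) := by
    simp
  have hlast2 : (m + (v + 3) - 1 - (v + 1)).choose (v + 1 - (v + 1)) * d ^ (v + 1)
      * (d - 1) ^ (v + 1 - (v + 1)) = d ^ (v + 1) := by
    simp
  rw [hlast1, hlast2, ← add_assoc, ← Finset.sum_add_distrib]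
  congr 1
  apply Finset.sum_congr rfl
  intro k hk
  have hk' : k ≤ v := by simpa [Nat.lt_succ_iff] using hk
  have e1 : m + (v + 3) - 1 - 1 - k = m + v + 1 - k := by omega
  have e2 : m + (v + 3) - 1 - k = (m + v + 1 - k) + 1 := by omega
  have e3 : v + 1 - k = (v - k) + 1 := by omega
  rw [e1, e2, e3, Nat.choose_succ_succ, pow_succ]
  ring
end

section
/- For all natural numbers n, d, w with 0 ≤ w < n, the closed-form expression Σ_{k=0}^{w} C(n-1-k, w-k) · d^k · (d-1)^{w-k} is at most (n·d)^w. -/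
lemma hockey_sum (w : ℕ) : ∀ n : ℕ, w < n →
    ∑ k ∈ Finset.range (w + 1), Nat.choose (n - 1 - k) (w - k) = n.choose w := by
  induction w with
  | zero => intro n hn; simp
  | succ w ih =>
    intro n hn
    rw [Finset.sum_range_succ']
    have h1 : n - 1 - 0 = n - 1 := rfl
    have hterms : ∀ i ∈ Finset.range (w + 1),
        Nat.choose (n - 1 - (i + 1)) (w + 1 - (i + 1)) = Nat.choose ((n - 1) - 1 - i) (w - i) := by
      intro i _
      congr 1 <;> omega
    rw [Finset.sum_congr rfl hterms, ih (n - 1) (by omega)]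
    have hn1 : n = (n - 1) + 1 := by omega
    rw [h1]
    conv_rhs => rw [hn1]
    rw [Nat.choose_succ_succ]
    simp only [Nat.succ_eq_add_one, Nat.sub_zero]

/-- For all natural numbers `n, d, w` with `0 ≤ w < n`, the closed-form
expression `Σ_{k=0}^{w} C(n-1-k, w-k) · d^k · (d-1)^{w-k}` is at most `(n·d)^w`. -/
theorem closed_form_le_nd_pow (n d w : ℕ) (hw : w < n) :
    ∑ k ∈ Finset.range (w + 1), Nat.choose (n - 1 - k) (w - k) * d ^ k * (d - 1) ^ (w - k)
      ≤ (n * d) ^ w := by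
  calc ∑ k ∈ Finset.range (w + 1), Nat.choose (n - 1 - k) (w - k) * d ^ k * (d - 1) ^ (w - k)
      ≤ ∑ k ∈ Finset.range (w + 1), Nat.choose (n - 1 - k) (w - k) * d ^ w := by
        apply Finset.sum_le_sum
        intro k hk
        have hk' : k ≤ w := Nat.lt_succ_iff.mp (Finset.mem_range.mp hk)
        rw [mul_assoc]
        apply Nat.mul_le_mul_left
        calc d ^ k * (d - 1) ^ (w - k) ≤ d ^ k * d ^ (w - k) := by
              exact Nat.mul_le_mul_left _ (Nat.pow_le_pow_left (Nat.sub_le d 1) _)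
          _ = d ^ w := by rw [← pow_add]; congr 1; omega
    _ = n.choose w * d ^ w := by rw [← Finset.sum_mul, hockey_sum w n hw]
    _ ≤ n ^ w * d ^ w := Nat.mul_le_mul_right _ (Nat.choose_le_pow n w)
    _ = (n * d) ^ w := (mul_pow n d w).symm
end
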